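/- For every h with 0 < h ≤ 1 the following hold: (i) the leading coefficient p = 1 − e^{2h} + 2he^h of the polynomial P_2 is negative; (ii) the discriminant expression h²(e^h+1)² + 2h(1 − e^{2h}) is positive; (iii) the number λ_1 = ( h(e^{2h}+1) − e^{2h} + 1 − (e^h − 1)·√( h²(e^h+1)² + 2h(1 − e^{2h}) ) ) / (1 − e^{2h} + 2he^h) is a root of P_2, i.e. P_2(λ_1) = 0; and (iv) 0 < |λ_1| < e^{−h}, so in particular |λ_1| < 1 and |λ_1| e^h < 1. -/

import Mathlib

/-!
With `E = eʰ`, `P₂(λ) = pλ² − 2Aλ + p` where `p = 1 − E² + 2hE` and `A = h(E² + 1) − E² + 1`.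
This quadratic is palindromic, its roots are `(A ± r)/p` with `r² = A² − p² = (E − 1)²·D`, `D` the
discriminant expression, so `r = (E − 1)√D` and `λ₁ = (A − r)/p`.

That `p < 0` is `sinh h > h`. The rest are bounds on `τ = tanh(h/2) = (E − 1)/(E + 1)`:
`τ < h/2` gives `D > 0` and `A > |p|`, hence `λ₁ < 0`; and `e^{2h}·P₂(−e^{−h})` is a positive
multiple of `h/2·(1 − τ⁴) − τ`, which is positive because `τ < h/2 − (h/2)⁵` by the Taylor bound
on `eʰ` for `h ≤ 1`. As `p < 0`, `P₂(−e^{−h}) > 0` puts `−e^{−h}` between the two roots, so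
`−e^{−h} < λ₁`.
-/

/-- The polynomial `P₂(λ) = (1−e^{2h})(1−λ)² − 2h(λ(e^{2h}+1) − e^h(λ²+1))`, the
polynomial `P_{2m−2}` of the construction of the discrete analogue of
`d⁴/dx⁴ − d²/dx²` for `m = 2`. -/
noncomputable def P2 (h lam : ℝ) : ℝ :=
  (1 - Real.exp (2 * h)) * (1 - lam) ^ 2
    - 2 * h * (lam * (Real.exp (2 * h) + 1) - Real.exp h * (lam ^ 2 + 1))

/-- The root `λ₁` of `P₂` of absolute value less than `1`. -/
noncomputable def lam1 (h : ℝ) : ℝ :=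
  (h * (Real.exp (2 * h) + 1) - Real.exp (2 * h) + 1
      - (Real.exp h - 1) *
          Real.sqrt (h ^ 2 * (Real.exp h + 1) ^ 2 + 2 * h * (1 - Real.exp (2 * h)))) /
    (1 - Real.exp (2 * h) + 2 * h * Real.exp h)

open Real

section PalindromicQuadratic

variable {K : Type*} [Field K] {p A r : K}

theorem palindromic_quadratic_eval_root (hp : p ≠ 0) (hr : r ^ 2 = A ^ 2 - p ^ 2) :
    p * ((A - r) / p) ^ 2 - 2 * A * ((A - r) / p) + p = 0 := by
  field_simp
  linear_combination hr

variable [LinearOrder K] [IsStrictOrderedRing K]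

theorem palindromic_root_neg (hp : p < 0) (hA : 0 < A) (hr0 : 0 ≤ r)
    (hr : r ^ 2 = A ^ 2 - p ^ 2) : (A - r) / p < 0 :=
  div_neg_of_pos_of_neg (by nlinarith) hp

theorem neg_lt_palindromic_root {c : K} (hp : p < 0) (hr0 : 0 ≤ r)
    (hr : r ^ 2 = A ^ 2 - p ^ 2) (hc : 0 < p * c ^ 2 + 2 * A * c + p) :
    -c < (A - r) / p := by
  rw [lt_div_iff_of_neg hp]
  nlinarith

end PalindromicQuadratic

theorem mul_pow_three_lt_mul_sub_pow_four {K : Type*} [Field K] [LinearOrder K]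
    [IsStrictOrderedRing K] {a b x : K} (ha : 0 < a) (hb : 0 < b) (hx : 0 < x)
    (hab : a < (x - x ^ 5) * b) : a * b ^ 3 < x * (b ^ 4 - a ^ 4) := by
  have hax : a < x * b := by nlinarith [pow_pos hx 5]
  calc a * b ^ 3 < (x - x ^ 5) * b * b ^ 3 := by gcongr
    _ = x * (b ^ 4 - (x * b) ^ 4) := by ring
    _ < x * (b ^ 4 - a ^ 4) := by gcongr

theorem exp_two_mul_eq_sq (h : ℝ) : exp (2 * h) = exp h ^ 2 := by
  rw [← exp_nat_mul]; norm_num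

theorem one_sub_exp_two_mul_add_lt_zero {h : ℝ} (hh : 0 < h) :
    1 - exp (2 * h) + 2 * h * exp h < 0 := by
  have hsinh : 1 - exp (2 * h) + 2 * h * exp h = 2 * exp h * (h - sinh h) := by
    rw [sinh_eq, exp_neg, exp_two_mul_eq_sq]
    field_simp
    ring
  rw [hsinh]
  exact mul_neg_of_pos_of_neg (by positivity) (sub_neg.2 (self_lt_sinh_iff.2 hh))

theorem exp_le_taylor {h : ℝ} (hh0 : 0 ≤ h) (hh1 : h ≤ 1) :
    exp h ≤ 1 + h + h ^ 2 / 2 + h ^ 3 / 6 + 5 / 96 * h ^ 4 := by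
  have := exp_bound' hh0 hh1 (n := 4) (by norm_num)
  simp only [Finset.sum_range_succ, Finset.sum_range_zero, Nat.factorial] at this
  norm_num at this
  linarith

theorem two_mul_exp_sub_one_lt {h : ℝ} (hh0 : 0 < h) (hh1 : h ≤ 1) :
    2 * (exp h - 1) < (h - h ^ 5 / 16) * (exp h + 1) := by
  have hU := exp_le_taylor hh0.le hh1
  have hk : ∀ k : ℕ, 4 ≤ k → h ^ k ≤ h ^ 4 := fun k hk => pow_le_pow_of_le_one hh0.le hh1 hk
  have hpos : 0 ≤ 2 - h + h ^ 5 / 16 := by linarith [pow_pos hh0 5]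
  nlinarith [pow_pos hh0 4, hk 5 (by norm_num), hk 6 (by norm_num), hk 7 (by norm_num),
    hk 8 (by norm_num), hk 9 (by norm_num), mul_le_mul_of_nonneg_left hU hpos]

theorem P2_eq_palindromic (h lam : ℝ) :
    P2 h lam = (1 - exp (2 * h) + 2 * h * exp h) * lam ^ 2
      - 2 * (h * (exp (2 * h) + 1) - exp (2 * h) + 1) * lam
      + (1 - exp (2 * h) + 2 * h * exp h) := by
  unfold P2; ring

theorem lam1_discr_pos {h : ℝ} (hh : 0 < h) (hh1 : h ≤ 1) :
    0 < h ^ 2 * (exp h + 1) ^ 2 + 2 * h * (1 - exp h ^ 2) := by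
  have htanh := two_mul_exp_sub_one_lt hh hh1
  rw [show h ^ 2 * (exp h + 1) ^ 2 + 2 * h * (1 - exp h ^ 2)
      = h * (exp h + 1) * (h * (exp h + 1) - 2 * (exp h - 1)) by ring]
  exact mul_pos (by positivity) (by nlinarith [pow_pos hh 5])

theorem lam1_numer_pos {h : ℝ} (hh : 0 < h) (hh1 : h ≤ 1) :
    0 < h * (exp h ^ 2 + 1) - exp h ^ 2 + 1 := by
  have htanh := two_mul_exp_sub_one_lt hh hh1
  have hE1 : 1 < exp h := one_lt_exp_iff.2 hh
  nlinarith [pow_pos hh 5, mul_pos hh (pow_pos (sub_pos.2 hE1) 2)]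

theorem lam1_quadratic_pos_at_neg_exp_neg {h : ℝ} (hh : 0 < h) (hh1 : h ≤ 1) :
    0 < (1 - exp h ^ 2 + 2 * h * exp h) * exp (-h) ^ 2
      + 2 * (h * (exp h ^ 2 + 1) - exp h ^ 2 + 1) * exp (-h)
      + (1 - exp h ^ 2 + 2 * h * exp h) := by
  have htanh := two_mul_exp_sub_one_lt hh hh1
  have hE1 : 1 < exp h := one_lt_exp_iff.2 hh
  have hq : (1 - exp h ^ 2 + 2 * h * exp h) * exp (-h) ^ 2
      + 2 * (h * (exp h ^ 2 + 1) - exp h ^ 2 + 1) * exp (-h)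
      + (1 - exp h ^ 2 + 2 * h * exp h) = exp (-h) ^ 2 *
        (h / 2 * ((exp h + 1) ^ 4 - (exp h - 1) ^ 4) - (exp h - 1) * (exp h + 1) ^ 3) := by
    rw [exp_neg]; field_simp; ring
  rw [hq]
  exact mul_pos (by positivity) (sub_pos.2 (mul_pow_three_lt_mul_sub_pow_four
    (by linarith) (by linarith) (by linarith) (by linarith)))

/-- For every `0 < h ≤ 1`: (i) the leading coefficient `p = 1 − e^{2h} + 2he^h` of `P₂`
is negative; (ii) the discriminant expression `h²(e^h+1)² + 2h(1−e^{2h})` is positive;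
(iii) `λ₁` is a root of `P₂`; (iv) `0 < |λ₁| < e^{−h}`, so in particular `|λ₁| < 1` and
`|λ₁|e^h < 1`. -/
theorem lam1_properties (h : ℝ) (hh : 0 < h) (hh1 : h ≤ 1) :
    (1 - Real.exp (2 * h) + 2 * h * Real.exp h < 0) ∧
    (0 < h ^ 2 * (Real.exp h + 1) ^ 2 + 2 * h * (1 - Real.exp (2 * h))) ∧
    P2 h (lam1 h) = 0 ∧
    (0 < |lam1 h| ∧ |lam1 h| < Real.exp (-h)) ∧
    |lam1 h| < 1 ∧ |lam1 h| * Real.exp h < 1 := by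
  have hp := one_sub_exp_two_mul_add_lt_zero hh
  have hD := lam1_discr_pos hh hh1
  rw [P2_eq_palindromic]
  unfold lam1
  rw [exp_two_mul_eq_sq] at hp ⊢
  set E := exp h
  set p := 1 - E ^ 2 + 2 * h * E
  set A := h * (E ^ 2 + 1) - E ^ 2 + 1
  set r := (E - 1) * √(h ^ 2 * (E + 1) ^ 2 + 2 * h * (1 - E ^ 2))
  have hr : r ^ 2 = A ^ 2 - p ^ 2 := by
    rw [mul_pow, sq_sqrt hD.le]; ring
  have hr0 : 0 ≤ r := mul_nonneg (by linarith [one_lt_exp_iff.2 hh]) (sqrt_nonneg _)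
  have hneg : (A - r) / p < 0 := palindromic_root_neg hp (lam1_numer_pos hh hh1) hr0 hr
  have hlow : -exp (-h) < (A - r) / p :=
    neg_lt_palindromic_root hp hr0 hr (lam1_quadratic_pos_at_neg_exp_neg hh hh1)
  have hinv : exp (-h) < 1 := exp_lt_one_iff.2 (by linarith)
  rw [abs_of_neg hneg]
  refine ⟨hp, hD, palindromic_quadratic_eval_root hp.ne hr, ⟨by linarith, by linarith⟩,
    by linarith, ?_⟩
  calc -((A - r) / p) * E < exp (-h) * E := by gcongr; linarith
    _ = 1 := by rw [← exp_add, neg_add_cancel, exp_zero]
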